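/- arXiv:2510.24700 — 4 statements merged into one kernel-verified Lean document; each statement's English description precedes it below -/
import Mathlib

section
/- Let π_0 be a probability distribution with full support on a finite set A, η > 0, and f, g: A → [0,1]. Define π_f(a) ∝ π_0(a)·exp(-η·f(a)) and π_g(a) ∝ π_0(a)·exp(-η·g(a)) (normalized Gibbs distributions). Then the total variation type quantity Σ_a |π_f(a) - π_g(a)| ≤ 2η·exp(2η)·Σ_a π_0(a)·|f(a) - g(a)|. -/
open Finset Real

lemma exp_lip_aux {x y : ℝ} (hy : y ≤ 0) (hxy : x ≤ y) :
    Real.exp y - Real.exp x ≤ y - x := by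
  have hmul : Real.exp (x - y) * Real.exp y = Real.exp x := by
    rw [← Real.exp_add]; ring_nf
  have h1 := Real.add_one_le_exp (x - y)
  have h2 : Real.exp y ≤ 1 := Real.exp_le_one_iff.2 hy
  have h3 := Real.exp_pos y
  nlinarith

lemma exp_lip {x y : ℝ} (hx : x ≤ 0) (hy : y ≤ 0) :
    |Real.exp x - Real.exp y| ≤ |x - y| := by
  rcases le_total x y with h | h
  · rw [abs_of_nonpos (by simp [Real.exp_le_exp.2 h]), abs_of_nonpos (by linarith)]
    have := exp_lip_aux hy h
    linarith
  · rw [abs_of_nonneg (by simp [Real.exp_le_exp.2 h]), abs_of_nonneg (by linarith)]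
    have := exp_lip_aux hx h
    linarith

theorem stmt_3 {A : Type*} [Fintype A]
    (π0 : A → ℝ) (hpos : ∀ a, 0 < π0 a) (hsum : ∑ a, π0 a = 1)
    (η : ℝ) (hη : 0 < η) (f g : A → ℝ)
    (hf : ∀ a, f a ∈ Set.Icc (0:ℝ) 1) (hg : ∀ a, g a ∈ Set.Icc (0:ℝ) 1)
    (πf πg : A → ℝ)
    (hπf : ∀ a, πf a = π0 a * Real.exp (-(η * f a)) / ∑ a', π0 a' * Real.exp (-(η * f a')))
    (hπg : ∀ a, πg a = π0 a * Real.exp (-(η * g a)) / ∑ a', π0 a' * Real.exp (-(η * g a'))) :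
    ∑ a, |πf a - πg a| ≤ 2 * η * Real.exp (2 * η) * ∑ a, π0 a * |f a - g a| := by
  set Zf := ∑ a', π0 a' * Real.exp (-(η * f a')) with hZfdef
  set Zg := ∑ a', π0 a' * Real.exp (-(η * g a')) with hZgdef
  set D := ∑ a, π0 a * |f a - g a| with hDdef
  have hD_nonneg : 0 ≤ D := Finset.sum_nonneg fun a _ =>
    mul_nonneg (hpos a).le (abs_nonneg _)
  have hZf_lb : Real.exp (-η) ≤ Zf := by
    calc Real.exp (-η) = ∑ a, π0 a * Real.exp (-η) := by
          rw [← Finset.sum_mul, hsum, one_mul]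
      _ ≤ Zf := Finset.sum_le_sum fun a _ =>
          mul_le_mul_of_nonneg_left
            (Real.exp_le_exp.2 (by nlinarith [(hf a).2])) (hpos a).le
  have hZf_pos : 0 < Zf := lt_of_lt_of_le (Real.exp_pos _) hZf_lb
  have hZg_pos : 0 < Zg := by
    calc (0:ℝ) < Real.exp (-η) := Real.exp_pos _
      _ = ∑ a, π0 a * Real.exp (-η) := by rw [← Finset.sum_mul, hsum, one_mul]
      _ ≤ Zg := Finset.sum_le_sum fun a _ =>
          mul_le_mul_of_nonneg_left
            (Real.exp_le_exp.2 (by nlinarith [(hg a).2])) (hpos a).le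
  -- termwise Lipschitz bound
  have hterm : ∀ a, |Real.exp (-(η * f a)) - Real.exp (-(η * g a))|
      ≤ η * |f a - g a| := by
    intro a
    have h1 : -(η * f a) ≤ 0 := by nlinarith [(hf a).1]
    have h2 : -(η * g a) ≤ 0 := by nlinarith [(hg a).1]
    calc |Real.exp (-(η * f a)) - Real.exp (-(η * g a))|
        ≤ |(-(η * f a)) - (-(η * g a))| := exp_lip h1 h2
      _ = η * |f a - g a| := by
          rw [show (-(η * f a)) - (-(η * g a)) = η * (g a - f a) by ring,
            abs_mul, abs_of_pos hη, abs_sub_comm]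
  have hsum1 : ∑ a, π0 a * |Real.exp (-(η * f a)) - Real.exp (-(η * g a))|
      ≤ η * D := by
    rw [hDdef, Finset.mul_sum]
    refine Finset.sum_le_sum fun a _ => ?_
    calc π0 a * |Real.exp (-(η * f a)) - Real.exp (-(η * g a))|
        ≤ π0 a * (η * |f a - g a|) :=
          mul_le_mul_of_nonneg_left (hterm a) (hpos a).le
      _ = η * (π0 a * |f a - g a|) := by ring
  have hZdiff : |Zf - Zg| ≤ η * D := by
    calc |Zf - Zg| = |∑ a, (π0 a * Real.exp (-(η * f a)) - π0 a * Real.exp (-(η * g a)))| := by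
          rw [Finset.sum_sub_distrib]
      _ ≤ ∑ a, |π0 a * Real.exp (-(η * f a)) - π0 a * Real.exp (-(η * g a))| :=
          Finset.abs_sum_le_sum_abs _ _
      _ = ∑ a, π0 a * |Real.exp (-(η * f a)) - Real.exp (-(η * g a))| := by
          refine Finset.sum_congr rfl fun a _ => ?_
          rw [← mul_sub, abs_mul, abs_of_pos (hpos a)]
      _ ≤ η * D := hsum1
  -- pointwise bound
  have hpoint : ∀ a, |πf a - πg a| ≤
      π0 a * |Real.exp (-(η * f a)) - Real.exp (-(η * g a))| / Zf
      + π0 a * Real.exp (-(η * g a)) * |Zf - Zg| / (Zf * Zg) := by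
    intro a
    have hid : πf a - πg a =
        π0 a * (Real.exp (-(η * f a)) - Real.exp (-(η * g a))) / Zf
        + π0 a * Real.exp (-(η * g a)) * (Zg - Zf) / (Zf * Zg) := by
      rw [hπf a, hπg a]
      field_simp
      ring
    rw [hid]
    calc |π0 a * (Real.exp (-(η * f a)) - Real.exp (-(η * g a))) / Zf
        + π0 a * Real.exp (-(η * g a)) * (Zg - Zf) / (Zf * Zg)|
        ≤ |π0 a * (Real.exp (-(η * f a)) - Real.exp (-(η * g a))) / Zf|
          + |π0 a * Real.exp (-(η * g a)) * (Zg - Zf) / (Zf * Zg)| := abs_add_le _ _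
      _ = π0 a * |Real.exp (-(η * f a)) - Real.exp (-(η * g a))| / Zf
          + π0 a * Real.exp (-(η * g a)) * |Zf - Zg| / (Zf * Zg) := by
          rw [abs_div, abs_mul, abs_of_pos (hpos a), abs_of_pos hZf_pos,
            abs_div, abs_mul, abs_mul, abs_of_pos (hpos a),
            abs_of_pos (Real.exp_pos _), abs_of_pos (mul_pos hZf_pos hZg_pos),
            abs_sub_comm Zg Zf]
  have hsumg : ∑ a, π0 a * Real.exp (-(η * g a)) = Zg := rfl
  have hinv : 1 / Zf ≤ Real.exp η := by
    rw [div_le_iff₀ hZf_pos]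
    calc (1:ℝ) = Real.exp η * Real.exp (-η) := by
          rw [← Real.exp_add]; simp
      _ ≤ Real.exp η * Zf := by
          exact mul_le_mul_of_nonneg_left hZf_lb (Real.exp_pos _).le
  calc ∑ a, |πf a - πg a|
      ≤ ∑ a, (π0 a * |Real.exp (-(η * f a)) - Real.exp (-(η * g a))| / Zf
        + π0 a * Real.exp (-(η * g a)) * |Zf - Zg| / (Zf * Zg)) :=
        Finset.sum_le_sum fun a _ => hpoint a
    _ = (∑ a, π0 a * |Real.exp (-(η * f a)) - Real.exp (-(η * g a))|) / Zf
        + Zg * |Zf - Zg| / (Zf * Zg) := by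
        rw [Finset.sum_add_distrib, ← Finset.sum_div, ← hsumg, ← Finset.sum_div,
          ← Finset.sum_mul]
    _ = (∑ a, π0 a * |Real.exp (-(η * f a)) - Real.exp (-(η * g a))|) / Zf
        + |Zf - Zg| / Zf := by
        rw [show Zg * |Zf - Zg| / (Zf * Zg) = |Zf - Zg| / Zf * (Zg / Zg) by ring,
          div_self hZg_pos.ne', mul_one]
    _ ≤ η * D / Zf + η * D / Zf := by
        gcongr
    _ = 2 * η * D * (1 / Zf) := by ring
    _ ≤ 2 * η * D * Real.exp η := by
        have h2 : 0 ≤ 2 * η * D := by positivity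
        exact mul_le_mul_of_nonneg_left hinv h2
    _ ≤ 2 * η * D * Real.exp (2 * η) :=
        mul_le_mul_of_nonneg_left (Real.exp_le_exp.2 (by linarith)) (by positivity)
    _ = 2 * η * Real.exp (2 * η) * D := by ring
end

section
/- Fix η > 0, a probability distribution π_0 with full support on a finite set A, and functions f, f*: A → [0,1]. For a distribution π on A with support contained in that of π_0 define V(π, f*) = Σ_a π(a)·f*(a) - η^{-1}·KL(π || π_0), and let π_f(a) ∝ π_0(a)·exp(η·f(a)). Then there exists γ ∈ [0,1] such that, with f' = γ·f + (1-γ)·f*, V(π_{f*}, f*) - V(π_f, f*) ≤ η · Σ_a π_{f'}(a)·(f(a) - f*(a))². -/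
/-!
Along the segment `g t = f* + t (f - f*)` the scaled log-partition function
`Φ t = η⁻¹ log ∑ π₀ exp (η g t)` has `Φ' t = E_{π_{g t}}[f - f*]` and
`Φ'' t = η Var_{π_{g t}}(f - f*) ≥ 0`. Since `V(π_g, f*) = E_{π_g}[f* - g] + Φ`, the
suboptimality of `π_f` is `Φ 0 - Φ 1 + Φ' 1`, the error of the tangent line of the convex
function `Φ` at `1`; two applications of the mean value theorem bound it by `Φ'' γ` for some
`γ ∈ (0, 1)`, and the variance is at most the second moment `E_{π_{g γ}}[(f - f*)²]`.
-/

open Finset Real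

/-- KL divergence between two distributions on a finite set. -/
noncomputable def KLdiv {A : Type*} [Fintype A] (p q : A → ℝ) : ℝ :=
  ∑ a, p a * Real.log (p a / q a)

/-- KL-regularized value of a policy `π` under reward `g`. -/
noncomputable def klValue {A : Type*} [Fintype A] (η : ℝ) (π0 pol g : A → ℝ) : ℝ :=
  (∑ a, pol a * g a) - η⁻¹ * KLdiv pol π0

/-- Gibbs tilt of `π0` by `exp (η f)`. -/
noncomputable def gibbs {A : Type*} [Fintype A] (η : ℝ) (π0 f : A → ℝ) (a : A) : ℝ :=
  π0 a * Real.exp (η * f a) / ∑ a', π0 a' * Real.exp (η * f a')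

theorem exists_mem_Ioo_sub_sub_add_le_deriv {Φ ψ ψ' : ℝ → ℝ} (hΦ : ∀ t, HasDerivAt Φ (ψ t) t)
    (hψ : ∀ t, HasDerivAt ψ (ψ' t) t) (hψ' : ∀ t, 0 ≤ ψ' t) :
    ∃ d ∈ Set.Ioo (0 : ℝ) 1, Φ 0 - Φ 1 + ψ 1 ≤ ψ' d := by
  obtain ⟨c, hc, hΦc⟩ := exists_hasDerivAt_eq_slope Φ ψ zero_lt_one
    (fun t _ => (hΦ t).continuousAt.continuousWithinAt) (fun t _ => hΦ t)
  obtain ⟨d, hd, hψd⟩ := exists_hasDerivAt_eq_slope ψ ψ' hc.2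
    (fun t _ => (hψ t).continuousAt.continuousWithinAt) (fun t _ => hψ t)
  refine ⟨d, ⟨hc.1.trans hd.1, hd.2⟩, ?_⟩
  rw [sub_zero, div_one] at hΦc
  have hψc : ψ 1 - ψ c = ψ' d * (1 - c) := by rw [hψd, div_mul_cancel₀ _ (sub_pos.2 hc.2).ne']
  calc Φ 0 - Φ 1 + ψ 1 = ψ' d * (1 - c) := by linarith
    _ ≤ ψ' d := mul_le_of_le_one_right (hψ' d) (by linarith [hc.1])

section GibbsFamily

variable {A : Type*} [Fintype A] (η : ℝ) (π0 : A → ℝ)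

noncomputable def logPartition (g : A → ℝ) : ℝ :=
  η⁻¹ * log (∑ a, π0 a * exp (η * g a))

theorem partition_pos [Nonempty A] (hpos : ∀ a, 0 < π0 a) (g : A → ℝ) :
    0 < ∑ a, π0 a * exp (η * g a) :=
  sum_pos (fun a _ => mul_pos (hpos a) (exp_pos _)) univ_nonempty

theorem gibbs_nonneg (hπ0 : ∀ a, 0 ≤ π0 a) (g : A → ℝ) (a : A) : 0 ≤ gibbs η π0 g a :=
  div_nonneg (mul_nonneg (hπ0 a) (exp_pos _).le)
    (sum_nonneg fun a _ => mul_nonneg (hπ0 a) (exp_pos _).le)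

theorem sum_gibbs [Nonempty A] (hpos : ∀ a, 0 < π0 a) (g : A → ℝ) :
    ∑ a, gibbs η π0 g a = 1 := by
  simp only [gibbs, ← sum_div]
  exact div_self (partition_pos η π0 hpos g).ne'

theorem sum_gibbs_mul (g u : A → ℝ) :
    ∑ a, gibbs η π0 g a * u a =
      (∑ a, π0 a * exp (η * g a) * u a) / ∑ a, π0 a * exp (η * g a) := by
  simp only [gibbs, div_mul_eq_mul_div, ← sum_div]

theorem sq_sum_gibbs_mul_le [Nonempty A] (hpos : ∀ a, 0 < π0 a) (g u : A → ℝ) :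
    (∑ a, gibbs η π0 g a * u a) ^ 2 ≤ ∑ a, gibbs η π0 g a * u a ^ 2 :=
  (even_two.convexOn_pow (𝕜 := ℝ)).map_sum_le
    (fun a _ => gibbs_nonneg η π0 (fun a => (hpos a).le) g a) (sum_gibbs η π0 hpos g)
    (fun _ _ => Set.mem_univ _)

theorem klValue_gibbs [Nonempty A] (hpos : ∀ a, 0 < π0 a) (hη : η ≠ 0) (g r : A → ℝ) :
    klValue η π0 (gibbs η π0 g) r =
      ∑ a, gibbs η π0 g a * (r a - g a) + logPartition η π0 g := by
  have hZ_pos := partition_pos η π0 hpos g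
  set Z := ∑ a, π0 a * exp (η * g a) with hZdef
  have hlog (a : A) : log (gibbs η π0 g a / π0 a) = η * g a - log Z := by
    have : gibbs η π0 g a / π0 a = exp (η * g a) / Z := by
      rw [gibbs, ← hZdef]; field_simp [(hpos a).ne']
    rw [this, log_div (exp_pos _).ne' hZ_pos.ne', log_exp]
  have hKL : KLdiv (gibbs η π0 g) π0 = η * ∑ a, gibbs η π0 g a * g a - log Z := by
    simp only [KLdiv, hlog, mul_sub, sum_sub_distrib, ← sum_mul, sum_gibbs η π0 hpos g, one_mul,
      mul_sum, mul_left_comm η]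
  rw [klValue, hKL, logPartition]
  simp only [mul_sub, sum_sub_distrib]
  field_simp
  ring

theorem hasDerivAt_sum_mul_exp_line (g Δ u : A → ℝ) (t : ℝ) :
    HasDerivAt (fun s => ∑ a, π0 a * exp (η * (g + s • Δ) a) * u a)
      (η * ∑ a, π0 a * exp (η * (g + t • Δ) a) * (Δ a * u a)) t := by
  rw [mul_sum]
  refine HasDerivAt.fun_sum fun a _ => ?_
  have hline : HasDerivAt (fun s => η * (g + s • Δ) a) (η * Δ a) t := by
    simpa using ((((hasDerivAt_id t).mul_const (Δ a)).const_add (g a)).const_mul η)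
  exact ((hline.exp.const_mul (π0 a)).mul_const (u a)).congr_deriv (by ring)

theorem hasDerivAt_logPartition_line [Nonempty A] (hpos : ∀ a, 0 < π0 a) (hη : η ≠ 0)
    (g Δ : A → ℝ) (t : ℝ) :
    HasDerivAt (fun s => logPartition η π0 (g + s • Δ))
      (∑ a, gibbs η π0 (g + t • Δ) a * Δ a) t := by
  have hZ' := hasDerivAt_sum_mul_exp_line η π0 g Δ 1 t
  simp only [Pi.one_apply, mul_one] at hZ'
  refine ((hZ'.log (partition_pos η π0 hpos _).ne').const_mul η⁻¹).congr_deriv ?_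
  rw [sum_gibbs_mul]
  field_simp

theorem hasDerivAt_sum_gibbs_mul_line [Nonempty A] (hpos : ∀ a, 0 < π0 a)
    (g Δ : A → ℝ) (t : ℝ) :
    HasDerivAt (fun s => ∑ a, gibbs η π0 (g + s • Δ) a * Δ a)
      (η * (∑ a, gibbs η π0 (g + t • Δ) a * Δ a ^ 2
        - (∑ a, gibbs η π0 (g + t • Δ) a * Δ a) ^ 2)) t := by
  have hZ' := hasDerivAt_sum_mul_exp_line η π0 g Δ 1 t
  simp only [Pi.one_apply, mul_one] at hZ'
  simp only [sum_gibbs_mul]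
  refine ((hasDerivAt_sum_mul_exp_line η π0 g Δ Δ t).div hZ'
    (partition_pos η π0 hpos _).ne').congr_deriv ?_
  field_simp

end GibbsFamily

theorem stmt_4_general {A : Type*} [Fintype A] [Nonempty A]
    (π0 : A → ℝ) (hpos : ∀ a, 0 < π0 a)
    (η : ℝ) (hη : 0 < η) (f fstar : A → ℝ) :
    ∃ γ ∈ Set.Icc (0:ℝ) 1,
      klValue η π0 (gibbs η π0 fstar) fstar - klValue η π0 (gibbs η π0 f) fstar
        ≤ η * ∑ a, gibbs η π0 (fun a' => γ * f a' + (1 - γ) * fstar a') a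
              * (f a - fstar a) ^ 2 := by
  have hpath (γ : ℝ) : (fun a => γ * f a + (1 - γ) * fstar a) = fstar + γ • (f - fstar) := by
    ext a; simp only [Pi.add_apply, Pi.smul_apply, Pi.sub_apply, smul_eq_mul]; ring
  obtain ⟨d, hd, hgap⟩ := exists_mem_Ioo_sub_sub_add_le_deriv
    (hasDerivAt_logPartition_line η π0 hpos hη.ne' fstar (f - fstar))
    (hasDerivAt_sum_gibbs_mul_line η π0 hpos fstar (f - fstar))
    (fun t => mul_nonneg hη.le (sub_nonneg.2 (sq_sum_gibbs_mul_le η π0 hpos _ _)))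
  refine ⟨d, Set.Ioo_subset_Icc_self hd, ?_⟩
  simp only [zero_smul, add_zero, one_smul, add_sub_cancel, Pi.sub_apply] at hgap
  rw [klValue_gibbs η π0 hpos hη.ne', klValue_gibbs η π0 hpos hη.ne', hpath]
  calc _ = logPartition η π0 fstar - logPartition η π0 f
        + ∑ a, gibbs η π0 f a * (f a - fstar a) := by
        simp only [sub_self, mul_zero, sum_const_zero, zero_add, ← neg_sub (f _),
          mul_neg, sum_neg_distrib]
        ring
    _ ≤ _ := hgap
    _ ≤ _ := by gcongr; exact sub_le_self _ (sq_nonneg _)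

theorem stmt_4 {A : Type*} [Fintype A] [Nonempty A]
    (π0 : A → ℝ) (hpos : ∀ a, 0 < π0 a) (hsum : ∑ a, π0 a = 1)
    (η : ℝ) (hη : 0 < η) (f fstar : A → ℝ)
    (hf : ∀ a, f a ∈ Set.Icc (0:ℝ) 1) (hfstar : ∀ a, fstar a ∈ Set.Icc (0:ℝ) 1) :
    ∃ γ ∈ Set.Icc (0:ℝ) 1,
      klValue η π0 (gibbs η π0 fstar) fstar - klValue η π0 (gibbs η π0 f) fstar
        ≤ η * ∑ a, gibbs η π0 (fun a' => γ * f a' + (1 - γ) * fstar a') a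
              * (f a - fstar a) ^ 2 :=
  stmt_4_general π0 hpos η hη f fstar
end

section
/- Consider a two-player zero-sum game value J(π¹, π²) = E_{a1∼π¹, a2∼π²}[P(a1,a2)] − η^{-1}·KL(π¹ || π_0) + η^{-1}·KL(π² || π_0) on a finite action set A, where P: A×A → [0,1] satisfies P(a1,a2) + P(a2,a1) = 1, π_0 has full support, and η > 0. If (π^{1,*}, π^{2,*}) is a Nash equilibrium with π^{1,*} = π^{2,*} = π*, then π* satisfies the fixed-point equation π*(a) ∝ π_0(a)·exp(η·E_{a'∼π*}[P(a,a')]). -/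
open Finset Real

/-- KL-regularized zero-sum game value. -/
noncomputable def gameValue {A : Type*} [Fintype A]
    (η : ℝ) (π0 : A → ℝ) (P : A → A → ℝ) (π1 π2 : A → ℝ) : ℝ :=
  (∑ a1, ∑ a2, π1 a1 * π2 a2 * P a1 a2)
    - η⁻¹ * KLdiv π1 π0 + η⁻¹ * KLdiv π2 π0

/-- Gibbs' inequality equality case: if KL(p‖q) ≤ 0 then p = q. -/
lemma kl_le_zero_eq {A : Type*} [Fintype A] (p q : A → ℝ)
    (hp : ∀ a, 0 < p a) (hq : ∀ a, 0 < q a)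
    (hps : ∑ a, p a = 1) (hqs : ∑ a, q a = 1)
    (h : ∑ a, p a * Real.log (p a / q a) ≤ 0) : ∀ a, p a = q a := by
  have hle : ∀ a ∈ Finset.univ, p a * Real.log (q a / p a) ≤ q a - p a := by
    intro a _
    have h1 : Real.log (q a / p a) ≤ q a / p a - 1 :=
      Real.log_le_sub_one_of_pos (div_pos (hq a) (hp a))
    have := mul_le_mul_of_nonneg_left h1 (hp a).le
    have hpne : p a ≠ 0 := (hp a).ne'
    calc p a * Real.log (q a / p a) ≤ p a * (q a / p a - 1) := this
      _ = q a - p a := by field_simp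
  have hsum : ∑ a, (q a - p a) ≤ ∑ a, p a * Real.log (q a / p a) := by
    have : ∑ a, p a * Real.log (q a / p a) = - ∑ a, p a * Real.log (p a / q a) := by
      rw [← Finset.sum_neg_distrib]
      refine Finset.sum_congr rfl fun a _ => ?_
      rw [← mul_neg, ← Real.log_inv, inv_div]
    rw [this, Finset.sum_sub_distrib, hps, hqs]
    linarith
  have heq : ∀ a ∈ Finset.univ, p a * Real.log (q a / p a) = q a - p a := by
    have := (Finset.sum_eq_sum_iff_of_le hle).mp (le_antisymm (Finset.sum_le_sum hle) hsum)
    intro a ha; exact this a ha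
  intro a
  by_contra hne
  have hx : q a / p a ≠ 1 := by
    intro hx1
    exact hne ((div_eq_one_iff_eq (hp a).ne').mp hx1).symm
  have hlt : Real.log (q a / p a) < q a / p a - 1 :=
    Real.log_lt_sub_one_of_pos (div_pos (hq a) (hp a)) hx
  have := mul_lt_mul_of_pos_left hlt (hp a)
  have hpne : p a ≠ 0 := (hp a).ne'
  have h2 : p a * (q a / p a - 1) = q a - p a := by field_simp
  have := heq a (Finset.mem_univ a)
  nlinarith

theorem stmt_16 {A : Type*} [Fintype A] [Nonempty A]
    (π0 : A → ℝ) (hpos : ∀ a, 0 < π0 a) (hsum : ∑ a, π0 a = 1)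
    (η : ℝ) (hη : 0 < η)
    (P : A → A → ℝ) (hP : ∀ a1 a2, P a1 a2 ∈ Set.Icc (0:ℝ) 1)
    (hskew : ∀ a1 a2, P a1 a2 + P a2 a1 = 1)
    (πstar : A → ℝ) (hπpos : ∀ a, 0 < πstar a) (hπsum : ∑ a, πstar a = 1)
    (hmax : ∀ π1 : A → ℝ, (∀ a, 0 < π1 a) → ∑ a, π1 a = 1 →
      gameValue η π0 P π1 πstar ≤ gameValue η π0 P πstar πstar)
    (hmin : ∀ π2 : A → ℝ, (∀ a, 0 < π2 a) → ∑ a, π2 a = 1 →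
      gameValue η π0 P πstar πstar ≤ gameValue η π0 P πstar π2) :
    ∀ a, πstar a =
      π0 a * Real.exp (η * ∑ a', πstar a' * P a a')
        / ∑ b, π0 b * Real.exp (η * ∑ a', πstar a' * P b a') := by
  set r : A → ℝ := fun a => ∑ a', πstar a' * P a a' with hr
  set Z : ℝ := ∑ b, π0 b * Real.exp (η * r b) with hZ
  have hZpos : 0 < Z := by
    apply Finset.sum_pos (fun b _ => mul_pos (hpos b) (Real.exp_pos _)) Finset.univ_nonempty
  set g : A → ℝ := fun a => π0 a * Real.exp (η * r a) / Z with hg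
  have hgpos : ∀ a, 0 < g a := fun a =>
    div_pos (mul_pos (hpos a) (Real.exp_pos _)) hZpos
  have hgsum : ∑ a, g a = 1 := by
    simp only [hg, ← Finset.sum_div]
    rw [← hZ, div_self hZpos.ne']
  -- key identity
  have key : ∀ π1 : A → ℝ, (∀ a, 0 < π1 a) → ∑ a, π1 a = 1 →
      gameValue η π0 P π1 πstar =
        -η⁻¹ * (∑ a, π1 a * Real.log (π1 a / g a)) + η⁻¹ * Real.log Z
          + η⁻¹ * KLdiv πstar π0 := by
    intro π1 hp1 hs1
    have hfirst : ∑ a1, ∑ a2, π1 a1 * πstar a2 * P a1 a2 = ∑ a, π1 a * r a := by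
      refine Finset.sum_congr rfl fun a _ => ?_
      rw [hr, Finset.mul_sum]
      exact Finset.sum_congr rfl fun b _ => by ring
    have hlog : ∀ a, Real.log (π1 a / g a)
        = Real.log (π1 a / π0 a) - η * r a + Real.log Z := by
      intro a
      rw [Real.log_div (hp1 a).ne' (hgpos a).ne',
        Real.log_div (hp1 a).ne' (hpos a).ne']
      have : g a = π0 a * Real.exp (η * r a) / Z := rfl
      rw [this, Real.log_div (mul_pos (hpos a) (Real.exp_pos _)).ne' hZpos.ne',
        Real.log_mul (hpos a).ne' (Real.exp_pos _).ne', Real.log_exp]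
      ring
    have hsum2 : ∑ a, π1 a * Real.log (π1 a / g a)
        = ∑ a, π1 a * Real.log (π1 a / π0 a) - η * ∑ a, π1 a * r a + Real.log Z := by
      have : ∑ a, π1 a * Real.log (π1 a / g a)
          = ∑ a, (π1 a * Real.log (π1 a / π0 a) - η * (π1 a * r a) + Real.log Z * π1 a) :=
        Finset.sum_congr rfl fun a _ => by rw [hlog a]; ring
      rw [this, Finset.sum_add_distrib, Finset.sum_sub_distrib, ← Finset.mul_sum,
        ← Finset.mul_sum, hs1, mul_one]
    unfold gameValue KLdiv
    rw [hfirst]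
    rw [show (∑ a, π1 a * Real.log (π1 a / π0 a)) = KLdiv π1 π0 from rfl] at hsum2 ⊢
    rw [hsum2]
    have hηne : η ≠ 0 := hη.ne'
    field_simp
    ring
  -- apply hmax with g
  have hmg := hmax g hgpos hgsum
  rw [key g hgpos hgsum, key πstar hπpos hπsum] at hmg
  have hgg : ∑ a, g a * Real.log (g a / g a) = 0 := by
    refine Finset.sum_eq_zero fun a _ => ?_
    rw [div_self (hgpos a).ne', Real.log_one, mul_zero]
  rw [hgg] at hmg
  have hklle : ∑ a, πstar a * Real.log (πstar a / g a) ≤ 0 := by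
    have hηi : 0 < η⁻¹ := by positivity
    nlinarith
  have := kl_le_zero_eq πstar g hπpos hgpos hπsum hgsum hklle
  intro a
  exact this a
end

section
/- Let π_0 be a probability distribution with full support on a finite set A, η > 0, and f, g: A → [0,1] with Gibbs policies π_f(a) ∝ π_0(a)·exp(-η·f(a)) and π_g(a) ∝ π_0(a)·exp(-η·g(a)). Then for any function P: A × A → [0,1] and any a' ∈ A, |Σ_a (π_f(a) − π_g(a))·P(a', a)| ≤ Σ_a |π_f(a) − π_g(a)| ≤ 2η·exp(2η)·Σ_a π_0(a)·|f(a) − g(a)|. -/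
open Finset Real

/-!
With weights `u = π₀ e^{-η f}`, `v = π₀ e^{-η g}` and partition functions `U`, `V`, the identity
`u/U - v/V = (u - v)/U + (v/V)(V - U)/U` gives `‖u/U - v/V‖₁ ≤ 2‖u - v‖₁ / U`. Since `exp` is
1-Lipschitz on `(-∞, 0]`, `‖u - v‖₁ ≤ η Σ π₀ |f - g|`, and `U ≥ e^{-η}` because `f ≤ 1`.
-/

lemma exp_sub_exp_le_of_le_of_nonpos {x y : ℝ} (hyx : y ≤ x) (hx : x ≤ 0) :
    exp x - exp y ≤ x - y := by
  have h1 : 1 - exp (y - x) ≤ x - y := by linarith [add_one_le_exp (y - x)]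
  have h2 : 0 ≤ 1 - exp (y - x) := by linarith [exp_le_one_iff.mpr (sub_nonpos.mpr hyx)]
  calc exp x - exp y = exp x * (1 - exp (y - x)) := by rw [mul_sub, ← exp_add]; ring_nf
    _ ≤ 1 * (x - y) := mul_le_mul (exp_le_one_iff.mpr hx) h1 h2 zero_le_one
    _ = x - y := one_mul _

lemma abs_exp_sub_exp_le_of_nonpos {x y : ℝ} (hx : x ≤ 0) (hy : y ≤ 0) :
    |exp x - exp y| ≤ |x - y| := by
  rcases le_total y x with hyx | hxy
  · rw [abs_of_nonneg (sub_nonneg.mpr (exp_le_exp.mpr hyx)), abs_of_nonneg (sub_nonneg.mpr hyx)]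
    exact exp_sub_exp_le_of_le_of_nonpos hyx hx
  · rw [abs_sub_comm, abs_sub_comm x, abs_of_nonneg (sub_nonneg.mpr (exp_le_exp.mpr hxy)),
      abs_of_nonneg (sub_nonneg.mpr hxy)]
    exact exp_sub_exp_le_of_le_of_nonpos hxy hy

section Normalization

variable {ι : Type*} {s : Finset ι}

lemma abs_sum_mul_le_sum_abs (d p : ι → ℝ) (hp : ∀ i ∈ s, |p i| ≤ 1) :
    |∑ i ∈ s, d i * p i| ≤ ∑ i ∈ s, |d i| :=
  (abs_sum_le_sum_abs _ _).trans <| sum_le_sum fun i hi => by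
    rw [abs_mul]; exact mul_le_of_le_one_right (abs_nonneg _) (hp i hi)

lemma sum_abs_div_sum_sub_div_sum_le {u v : ι → ℝ} (hv : ∀ i ∈ s, 0 ≤ v i)
    (hU : 0 < ∑ i ∈ s, u i) (hV : 0 < ∑ i ∈ s, v i) :
    ∑ i ∈ s, |u i / ∑ j ∈ s, u j - v i / ∑ j ∈ s, v j|
      ≤ 2 * (∑ i ∈ s, |u i - v i|) / ∑ i ∈ s, u i := by
  set U := ∑ j ∈ s, u j
  set V := ∑ j ∈ s, v j
  have hsplit : ∀ i, u i / U - v i / V = (u i - v i) / U + v i / V * ((V - U) / U) := by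
    intro i; field_simp; ring
  have hVU : |V - U| ≤ ∑ i ∈ s, |u i - v i| := by
    rw [abs_sub_comm, ← sum_sub_distrib]; exact abs_sum_le_sum_abs _ _
  calc ∑ i ∈ s, |u i / U - v i / V|
      ≤ ∑ i ∈ s, (|u i - v i| / U + v i / V * (|V - U| / U)) := by
        refine sum_le_sum fun i hi => ?_
        rw [hsplit]
        refine (abs_add_le _ _).trans (le_of_eq ?_)
        rw [abs_div, abs_of_pos hU, abs_mul, abs_div, abs_div, abs_of_pos hU, abs_of_pos hV,
          abs_of_nonneg (hv i hi)]
    _ = (∑ i ∈ s, |u i - v i|) / U + |V - U| / U := by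
        rw [sum_add_distrib, ← sum_div, ← sum_mul, ← sum_div, div_self hV.ne', one_mul]
    _ ≤ 2 * (∑ i ∈ s, |u i - v i|) / U := by
        rw [two_mul, add_div]; gcongr

end Normalization

section Gibbs

variable {ι : Type*} {s : Finset ι} {π₀ : ι → ℝ} {η : ℝ}

lemma exp_neg_le_sum_mul_exp_neg_mul {h : ι → ℝ} (hπ₀ : ∀ i ∈ s, 0 ≤ π₀ i)
    (hsum : ∑ i ∈ s, π₀ i = 1) (hη : 0 ≤ η) (hh : ∀ i ∈ s, h i ≤ 1) :
    exp (-η) ≤ ∑ i ∈ s, π₀ i * exp (-(η * h i)) :=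
  calc exp (-η) = ∑ i ∈ s, π₀ i * exp (-η) := by rw [← sum_mul, hsum, one_mul]
    _ ≤ ∑ i ∈ s, π₀ i * exp (-(η * h i)) := sum_le_sum fun i hi =>
        mul_le_mul_of_nonneg_left (exp_le_exp.mpr (by nlinarith [hh i hi])) (hπ₀ i hi)

lemma sum_abs_mul_exp_neg_mul_sub_le {f g : ι → ℝ} (hπ₀ : ∀ i ∈ s, 0 ≤ π₀ i) (hη : 0 ≤ η)
    (hf : ∀ i ∈ s, 0 ≤ f i) (hg : ∀ i ∈ s, 0 ≤ g i) :
    ∑ i ∈ s, |π₀ i * exp (-(η * f i)) - π₀ i * exp (-(η * g i))|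
      ≤ η * ∑ i ∈ s, π₀ i * |f i - g i| := by
  rw [mul_sum]
  refine sum_le_sum fun i hi => ?_
  have hexp : |exp (-(η * f i)) - exp (-(η * g i))| ≤ η * |f i - g i| := by
    calc |exp (-(η * f i)) - exp (-(η * g i))| ≤ |-(η * f i) - -(η * g i)| :=
          abs_exp_sub_exp_le_of_nonpos (by nlinarith [hf i hi]) (by nlinarith [hg i hi])
      _ = η * |f i - g i| := by
          rw [← abs_of_nonneg hη, ← abs_mul, abs_of_nonneg hη, abs_sub_comm]; ring_nf
  rw [← mul_sub, abs_mul, abs_of_nonneg (hπ₀ i hi), mul_left_comm]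
  exact mul_le_mul_of_nonneg_left hexp (hπ₀ i hi)

end Gibbs

theorem stmt_19 {A : Type*} [Fintype A]
    (π0 : A → ℝ) (hpos : ∀ a, 0 < π0 a) (hsum : ∑ a, π0 a = 1)
    (η : ℝ) (hη : 0 < η) (f g : A → ℝ)
    (hf : ∀ a, f a ∈ Set.Icc (0:ℝ) 1) (hg : ∀ a, g a ∈ Set.Icc (0:ℝ) 1)
    (πf πg : A → ℝ)
    (hπf : ∀ a, πf a = π0 a * Real.exp (-(η * f a)) / ∑ a', π0 a' * Real.exp (-(η * f a')))
    (hπg : ∀ a, πg a = π0 a * Real.exp (-(η * g a)) / ∑ a', π0 a' * Real.exp (-(η * g a')))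
    (P : A → A → ℝ) (hP : ∀ a1 a2, P a1 a2 ∈ Set.Icc (0:ℝ) 1) (a' : A) :
    |∑ a, (πf a - πg a) * P a' a| ≤ ∑ a, |πf a - πg a| ∧
      ∑ a, |πf a - πg a| ≤ 2 * η * Real.exp (2 * η) * ∑ a, π0 a * |f a - g a| := by
  refine ⟨abs_sum_mul_le_sum_abs _ _ fun a _ => ?_, ?_⟩
  · exact abs_le.mpr ⟨by linarith [(hP a' a).1], (hP a' a).2⟩
  have hπ₀ : ∀ a ∈ univ, 0 ≤ π0 a := fun a _ => (hpos a).le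
  have hZ (h : A → ℝ) (hh : ∀ a, h a ∈ Set.Icc (0:ℝ) 1) :
      exp (-η) ≤ ∑ a, π0 a * exp (-(η * h a)) :=
    exp_neg_le_sum_mul_exp_neg_mul hπ₀ hsum hη.le fun a _ => (hh a).2
  have hweights := sum_abs_mul_exp_neg_mul_sub_le hπ₀ hη.le (f := f) (g := g)
    (fun a _ => (hf a).1) (fun a _ => (hg a).1)
  set S := ∑ a, π0 a * |f a - g a|
  have hS : 0 ≤ S := sum_nonneg fun a _ => mul_nonneg (hpos a).le (abs_nonneg _)
  simp_rw [hπf, hπg]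
  calc _ ≤ 2 * (∑ a, |π0 a * exp (-(η * f a)) - π0 a * exp (-(η * g a))|)
          / ∑ a, π0 a * exp (-(η * f a)) :=
        sum_abs_div_sum_sub_div_sum_le (fun a _ => mul_nonneg (hpos a).le (exp_pos _).le)
          ((exp_pos _).trans_le (hZ f hf)) ((exp_pos _).trans_le (hZ g hg))
    _ ≤ 2 * (η * S) / exp (-η) := by gcongr; exact hZ f hf
    _ = 2 * η * exp η * S := by rw [exp_neg, div_inv_eq_mul]; ring
    _ ≤ 2 * η * exp (2 * η) * S := by gcongr; linarith
end
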